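/- The braid group symmetry T̃_i on Ũ_v(g) commutes with the bar anti-involution: for all u ∈ Ũ_v(g), the bar of T̃_i(u) equals T̃_i(ū). -/

import Mathlib

/-!
The Drinfeld double quantum group `Ũ_v(g)` (with invertible `K_i`, `K_i'`) of a
simply-laced Cartan matrix, over `ℚ(v^{1/2})` (modelled as `RatFunc ℚ` with
`u = v^{1/2}` the indeterminate, `v = u²`).
-/

noncomputable section

/-- `u = v^{1/2}`. -/
def u : RatFunc ℚ := RatFunc.X

/-- `v = u²`. -/
def v : RatFunc ℚ := u ^ 2

/-- Quantum integer `[r]` (in `v`). -/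
def qint (r : ℤ) : RatFunc ℚ := (v ^ r - v ^ (-r)) / (v - v⁻¹)

/-- Quantum factorial. -/
def qfact (n : ℕ) : RatFunc ℚ := ∏ i ∈ Finset.range n, qint ((i : ℤ) + 1)

/-- Gaussian binomial coefficient. -/
def qbinom (m : ℤ) (r : ℕ) : RatFunc ℚ :=
  (∏ i ∈ Finset.range r, qint (m - (i : ℤ))) / qfact r

/-- Generators of `Ũ_v(g)`: `E i`, `F i`, `K i`, `K' i` and the inverses
`Ki i = K i⁻¹`, `K'i i = (K' i)⁻¹`. -/
inductive Gen (I : Type) where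
  | E : I → Gen I
  | F : I → Gen I
  | K : I → Gen I
  | K' : I → Gen I
  | Ki : I → Gen I
  | K'i : I → Gen I

open FreeAlgebra in
/-- The defining relations of `Ũ_v(g)`. -/
inductive QGRel (I : Type) [DecidableEq I] (c : I → I → ℤ) :
    FreeAlgebra (RatFunc ℚ) (Gen I) → FreeAlgebra (RatFunc ℚ) (Gen I) → Prop
  | EF (i j : I) :
      QGRel I c (ι _ (Gen.E i) * ι _ (Gen.F j) - ι _ (Gen.F j) * ι _ (Gen.E i))
        (if i = j then (v⁻¹ - v) • (ι _ (Gen.K i) - ι _ (Gen.K' i)) else 0)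
  | KK (i j : I) : QGRel I c (ι _ (Gen.K i) * ι _ (Gen.K j)) (ι _ (Gen.K j) * ι _ (Gen.K i))
  | KK' (i j : I) : QGRel I c (ι _ (Gen.K i) * ι _ (Gen.K' j)) (ι _ (Gen.K' j) * ι _ (Gen.K i))
  | K'K' (i j : I) : QGRel I c (ι _ (Gen.K' i) * ι _ (Gen.K' j)) (ι _ (Gen.K' j) * ι _ (Gen.K' i))
  | Kinv (i : I) : QGRel I c (ι _ (Gen.K i) * ι _ (Gen.Ki i)) 1
  | invK (i : I) : QGRel I c (ι _ (Gen.Ki i) * ι _ (Gen.K i)) 1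
  | K'inv (i : I) : QGRel I c (ι _ (Gen.K' i) * ι _ (Gen.K'i i)) 1
  | invK' (i : I) : QGRel I c (ι _ (Gen.K'i i) * ι _ (Gen.K' i)) 1
  | KE (i j : I) :
      QGRel I c (ι _ (Gen.K i) * ι _ (Gen.E j)) ((v ^ (c i j)) • (ι _ (Gen.E j) * ι _ (Gen.K i)))
  | KF (i j : I) :
      QGRel I c (ι _ (Gen.K i) * ι _ (Gen.F j)) ((v ^ (-c i j)) • (ι _ (Gen.F j) * ι _ (Gen.K i)))
  | K'E (i j : I) :
      QGRel I c (ι _ (Gen.K' i) * ι _ (Gen.E j)) ((v ^ (-c i j)) • (ι _ (Gen.E j) * ι _ (Gen.K' i)))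
  | K'F (i j : I) :
      QGRel I c (ι _ (Gen.K' i) * ι _ (Gen.F j)) ((v ^ (c i j)) • (ι _ (Gen.F j) * ι _ (Gen.K' i)))
  | serreE (i j : I) (h : i ≠ j) :
      QGRel I c
        (∑ r ∈ Finset.range ((1 - c i j).toNat + 1),
          ((-1 : RatFunc ℚ) ^ r * qbinom (1 - c i j) r) •
            (ι _ (Gen.E i) ^ r * ι _ (Gen.E j) * ι _ (Gen.E i) ^ ((1 - c i j).toNat - r))) 0
  | serreF (i j : I) (h : i ≠ j) :
      QGRel I c
        (∑ r ∈ Finset.range ((1 - c i j).toNat + 1),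
          ((-1 : RatFunc ℚ) ^ r * qbinom (1 - c i j) r) •
            (ι _ (Gen.F i) ^ r * ι _ (Gen.F j) * ι _ (Gen.F i) ^ ((1 - c i j).toNat - r))) 0

/-- The Drinfeld double quantum group `Ũ_v(g)`. -/
def QG (I : Type) [DecidableEq I] (c : I → I → ℤ) : Type := RingQuot (QGRel I c)

instance (I : Type) [DecidableEq I] (c : I → I → ℤ) : Ring (QG I c) :=
  inferInstanceAs (Ring (RingQuot (QGRel I c)))

instance (I : Type) [DecidableEq I] (c : I → I → ℤ) : Algebra (RatFunc ℚ) (QG I c) :=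
  inferInstanceAs (Algebra (RatFunc ℚ) (RingQuot (QGRel I c)))

variable {I : Type} [DecidableEq I] [Fintype I]

/-- Image of a generator in `Ũ_v(g)`. -/
def gen (c : I → I → ℤ) (x : Gen I) : QG I c :=
  RingQuot.mkAlgHom (RatFunc ℚ) (QGRel I c) (FreeAlgebra.ι _ x)

/-- The element `K i ^ m` for `m ∈ ℤ`. -/
def Kzpow (c : I → I → ℤ) (i : I) (m : ℤ) : QG I c :=
  if 0 ≤ m then gen c (Gen.K i) ^ m.toNat else gen c (Gen.Ki i) ^ (-m).toNat

/-- The element `K' i ^ m` for `m ∈ ℤ`. -/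
def K'zpow (c : I → I → ℤ) (i : I) (m : ℤ) : QG I c :=
  if 0 ≤ m then gen c (Gen.K' i) ^ m.toNat else gen c (Gen.K'i i) ^ (-m).toNat

/-- `K_μ = ∏ i K_i^{μ_i}` (the factors pairwise commute, so any enumeration order
gives the same element). -/
def Kmu (c : I → I → ℤ) (μ : I → ℤ) : QG I c :=
  ((Finset.univ : Finset I).toList.map (fun i => Kzpow c i (μ i))).prod

/-- `K'_μ = ∏ i (K'_i)^{μ_i}`. -/
def K'mu (c : I → I → ℤ) (μ : I → ℤ) : QG I c :=
  ((Finset.univ : Finset I).toList.map (fun i => K'zpow c i (μ i))).prod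

/-- The simple reflection `s_i` on the root lattice `ℤ^I`, `s_i(α_j) = α_j − c_{ij} α_i`,
written in coordinates. -/
def si (c : I → I → ℤ) (i : I) (μ : I → ℤ) : I → ℤ :=
  fun k => if k = i then μ i - ∑ j, c i j * μ j else μ k


/-!
Both `bar ∘ T̃_i` and `T̃_i ∘ bar` are additive and reverse products, so they agree once they agree
on scalars and on generators. The scalars `r` whose bar is again a scalar form a subfield of
`ℚ(v^{1/2})` containing `v^{1/2}`, hence all of it, and `T̃_i` fixes scalars. Since the generators
are bar-invariant, it remains to see that every `T̃_i(g)` is: for `E_i, F_i` this is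
`K_i E_i = v² E_i K_i` (resp. `K'_i F_i = v² F_i K'_i`) conjugated by the inverse Cartan element;
the quantum commutator `(v - v⁻¹)⁻¹ (v^{1/2} x y - v^{-1/2} y x)` of bar-invariant `x, y` is
bar-invariant because both `v - v⁻¹` and the bracket change sign; and `K_{s_i μ}` lies in the
commutative monoid generated by the bar-invariant `K_j^{±1}`, on which an anti-homomorphism is the
identity.
-/

theorem Units.mul_inv_eq_smul_inv_mul {R A : Type*} [CommSemiring R] [Semiring A] [Algebra R A]
    {U : Aˣ} {y : A} {r : R} (h : ↑U * y = r • (y * ↑U)) : y * ↑U⁻¹ = r • (↑U⁻¹ * y) := by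
  calc y * ↑U⁻¹ = ↑U⁻¹ * (↑U * y) * ↑U⁻¹ := by rw [Units.inv_mul_cancel_left]
    _ = r • (↑U⁻¹ * y) := by
      rw [h, mul_smul_comm, smul_mul_assoc, ← mul_assoc, Units.mul_inv_cancel_right]

theorem Units.commute_of_mem_range_union {M ι : Type*} [Monoid M] {U : ι → Mˣ}
    (hU : ∀ a b, Commute (U a : M) (U b)) :
    ∀ x ∈ Set.range (fun a => (U a : M)) ∪ Set.range (fun a => (↑(U a)⁻¹ : M)),
    ∀ y ∈ Set.range (fun a => (U a : M)) ∪ Set.range (fun a => (↑(U a)⁻¹ : M)), x * y = y * x := by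
  rintro _ (⟨a, rfl⟩ | ⟨a, rfl⟩) _ (⟨b, rfl⟩ | ⟨b, rfl⟩)
  · exact (hU a b).eq
  · exact (hU a b).units_inv_right.eq
  · exact (hU a b).units_inv_left.eq
  · exact (hU a b).units_inv_right.units_inv_left.eq

theorem List.prod_map_piSingle {ι M : Type*} [DecidableEq ι] [Monoid M] {l : List ι}
    (hl : l.Nodup) {j : ι} (hj : j ∈ l) (z : ι → ℤ → M) (hz : ∀ k, z k 0 = 1) (m : ℤ) :
    (l.map fun k => z k (Pi.single (M := fun _ => ℤ) j m k)).prod = z j m := by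
  rw [List.prod_map_eq_pow_single j _ fun k hk _ => by rw [Pi.single_eq_of_ne hk, hz],
    List.count_eq_one_of_mem hl hj, pow_one, Pi.single_eq_same]

theorem eq_self_of_mem_closure_of_antiHom {M : Type*} [Monoid M] {bar : M → M}
    (hmul : ∀ x y, bar (x * y) = bar y * bar x) (hone : bar 1 = 1) {S : Set M}
    (hcomm : ∀ x ∈ S, ∀ y ∈ S, x * y = y * x) (hfix : ∀ x ∈ S, bar x = x) {x : M}
    (hx : x ∈ Submonoid.closure S) : bar x = x := by
  have hcent := Submonoid.closure_le_centralizer_centralizer S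
  induction hx using Submonoid.closure_induction with
  | mem x hx => exact hfix x hx
  | one => exact hone
  | mul x y hx hy ihx ihy =>
    rw [hmul, ihx, ihy]
    exact Set.centralizer_centralizer_comm_of_comm hcomm y (hcent hy) x (hcent hx)

section AntiHom

variable {A : Type*} [Ring A]

structure IsAntiHom (bar : A → A) : Prop where
  map_add : ∀ x y, bar (x + y) = bar x + bar y
  map_mul : ∀ x y, bar (x * y) = bar y * bar x
  map_one : bar 1 = 1

namespace IsAntiHom

variable {bar : A → A}

theorem map_zero (hb : IsAntiHom bar) : bar 0 = 0 := (AddMonoidHom.mk' bar hb.map_add).map_zero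

theorem map_neg (hb : IsAntiHom bar) (x : A) : bar (-x) = -bar x :=
  (AddMonoidHom.mk' bar hb.map_add).map_neg x

theorem map_sub (hb : IsAntiHom bar) (x y : A) : bar (x - y) = bar x - bar y :=
  (AddMonoidHom.mk' bar hb.map_add).map_sub x y

theorem commute_algHom_of_surjective {R X : Type*} [CommSemiring R] [Algebra R A]
    (hb : IsAntiHom bar) {π : FreeAlgebra R X →ₐ[R] A}
    (hπ : Function.Surjective π) (hscalar : ∀ r, ∃ s, bar (algebraMap R A r) = algebraMap R A s)
    (hgen : ∀ x, bar (π (FreeAlgebra.ι R x)) = π (FreeAlgebra.ι R x)) (T : A →ₐ[R] A)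
    (hT : ∀ x, bar (T (π (FreeAlgebra.ι R x))) = T (π (FreeAlgebra.ι R x))) :
    Function.Commute bar T := by
  intro a
  obtain ⟨a, rfl⟩ := hπ a
  induction a using FreeAlgebra.induction with
  | grade0 r =>
    obtain ⟨s, hs⟩ := hscalar r
    simp only [AlgHom.commutes, hs]
  | grade1 x => rw [hT, hgen]
  | add a b ha hb' => simp only [_root_.map_add, hb.map_add, ha, hb']
  | mul a b ha hb' => simp only [_root_.map_mul, hb.map_mul, ha, hb']

variable {K : Type*} [Field K] [Algebra K A]

theorem map_smul_of_map_algebraMap (hb : IsAntiHom bar) {r s : K}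
    (h : bar (algebraMap K A r) = algebraMap K A s) (x : A) : bar (r • x) = s • bar x := by
  rw [Algebra.smul_def, hb.map_mul, h, ← Algebra.commutes, Algebra.smul_def]

theorem map_algebraMap_inv (hb : IsAntiHom bar) {r s : K}
    (h : bar (algebraMap K A r) = algebraMap K A s) :
    bar (algebraMap K A r⁻¹) = algebraMap K A s⁻¹ := by
  obtain hA | hA := subsingleton_or_nontrivial A
  · exact Subsingleton.elim _ _
  rcases eq_or_ne r 0 with rfl | hr
  · have hs : s = 0 := (algebraMap K A).injective (by rw [← h, _root_.map_zero, hb.map_zero])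
    simp only [hs, inv_zero, _root_.map_zero, hb.map_zero]
  have key : bar (algebraMap K A r⁻¹) * algebraMap K A s = 1 := by
    rw [← h, ← hb.map_mul, ← _root_.map_mul, mul_inv_cancel₀ hr, _root_.map_one, hb.map_one]
  have hs : s ≠ 0 := by
    rintro rfl
    simp at key
  calc bar (algebraMap K A r⁻¹)
      = bar (algebraMap K A r⁻¹) * algebraMap K A s * algebraMap K A s⁻¹ := by
        rw [mul_assoc, ← _root_.map_mul, mul_inv_cancel₀ hs, _root_.map_one, mul_one]
    _ = algebraMap K A s⁻¹ := by rw [key, one_mul]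

def scalarSubfield (hb : IsAntiHom bar) : Subfield K where
  carrier := {r | ∃ s, bar (algebraMap K A r) = algebraMap K A s}
  zero_mem' := ⟨0, by simp only [_root_.map_zero, hb.map_zero]⟩
  one_mem' := ⟨1, by simp only [_root_.map_one, hb.map_one]⟩
  add_mem' := by
    rintro r r' ⟨s, hs⟩ ⟨s', hs'⟩
    exact ⟨s + s', by rw [_root_.map_add, _root_.map_add, hb.map_add, hs, hs']⟩
  mul_mem' := by
    rintro r r' ⟨s, hs⟩ ⟨s', hs'⟩
    exact ⟨s' * s, by rw [_root_.map_mul, _root_.map_mul, hb.map_mul, hs, hs']⟩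
  neg_mem' := by
    rintro r ⟨s, hs⟩
    exact ⟨-s, by rw [_root_.map_neg, _root_.map_neg, hb.map_neg, hs]⟩
  inv_mem' := by
    rintro r ⟨s, hs⟩
    exact ⟨s⁻¹, hb.map_algebraMap_inv hs⟩

end IsAntiHom

end AntiHom

theorem RatFunc.subfield_eq_top_of_X_mem {S : Subfield (RatFunc ℚ)} (hX : RatFunc.X ∈ S) :
    S = ⊤ := by
  have hpoly (p : Polynomial ℚ) : algebraMap (Polynomial ℚ) (RatFunc ℚ) p ∈ S := by
    induction p using Polynomial.induction_on' with
    | add p q hp hq => rw [map_add]; exact add_mem hp hq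
    | monomial n a =>
      rw [← Polynomial.C_mul_X_pow_eq_monomial, map_mul, map_pow, RatFunc.algebraMap_C,
        RatFunc.algebraMap_X, eq_ratCast RatFunc.C]
      exact mul_mem (SubfieldClass.ratCast_mem S a) (pow_mem hX n)
  refine eq_top_iff.mpr fun r _ => ?_
  rw [← RatFunc.num_div_denom r]
  exact div_mem (hpoly _) (hpoly _)

theorem u_zpow_two : u ^ (2 : ℤ) = v := zpow_ofNat u 2

theorem v_ne_zero : v ≠ 0 := pow_ne_zero 2 RatFunc.X_ne_zero

namespace IsAntiHom

variable {A : Type*} [Ring A] [Algebra (RatFunc ℚ) A] {bar : A → A}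

theorem map_algebraMap_u_zpow (hb : IsAntiHom bar)
    (hu : ∀ (n : ℤ) (x : A), bar (u ^ n • x) = u ^ (-n) • bar x) (n : ℤ) :
    bar (algebraMap (RatFunc ℚ) A (u ^ n)) = algebraMap (RatFunc ℚ) A (u ^ (-n)) := by
  rw [Algebra.algebraMap_eq_smul_one, hu, hb.map_one, ← Algebra.algebraMap_eq_smul_one]

theorem exists_map_algebraMap (hb : IsAntiHom bar)
    (hu : ∀ (n : ℤ) (x : A), bar (u ^ n • x) = u ^ (-n) • bar x) (r : RatFunc ℚ) :
    ∃ s, bar (algebraMap (RatFunc ℚ) A r) = algebraMap (RatFunc ℚ) A s := by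
  have hX : u ∈ hb.scalarSubfield := ⟨u⁻¹, by simpa using hb.map_algebraMap_u_zpow hu 1⟩
  show r ∈ hb.scalarSubfield
  rw [RatFunc.subfield_eq_top_of_X_mem hX]
  exact Subfield.mem_top r

theorem map_v_smul_inv_mul (hb : IsAntiHom bar)
    (hu : ∀ (n : ℤ) (x : A), bar (u ^ n • x) = u ^ (-n) • bar x) {U : Aˣ} {y : A}
    (hU : bar ↑U⁻¹ = ↑U⁻¹) (hy : bar y = y) (h : ↑U * y = v ^ 2 • (y * ↑U)) :
    bar (v • (↑U⁻¹ * y)) = v • (↑U⁻¹ * y) := by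
  rw [← u_zpow_two, hu, zpow_neg, u_zpow_two, hb.map_mul, hU, hy,
    Units.mul_inv_eq_smul_inv_mul h, smul_smul, sq, inv_mul_cancel_left₀ v_ne_zero]

theorem map_qcommutator (hb : IsAntiHom bar)
    (hu : ∀ (n : ℤ) (x : A), bar (u ^ n • x) = u ^ (-n) • bar x) {x y : A}
    (hx : bar x = x) (hy : bar y = y) :
    bar ((v - v⁻¹)⁻¹ • (u • (x * y) - u⁻¹ • (y * x))) =
      (v - v⁻¹)⁻¹ • (u • (x * y) - u⁻¹ • (y * x)) := by
  have hw : bar (algebraMap (RatFunc ℚ) A (v - v⁻¹)) = algebraMap (RatFunc ℚ) A (-(v - v⁻¹)) := by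
    rw [← u_zpow_two, ← zpow_neg, _root_.map_sub, hb.map_sub, hb.map_algebraMap_u_zpow hu,
      hb.map_algebraMap_u_zpow hu, neg_neg, neg_sub, _root_.map_sub]
  have hu₁ := hu 1
  have hu_inv := hu (-1)
  simp only [zpow_one, zpow_neg, neg_neg] at hu₁ hu_inv
  rw [hb.map_smul_of_map_algebraMap (hb.map_algebraMap_inv hw), hb.map_sub, hu₁, hu_inv,
    hb.map_mul, hb.map_mul, hx, hy, inv_neg, neg_smul, ← smul_neg, neg_sub]

end IsAntiHom

namespace QG

variable {I : Type} [DecidableEq I] {c : I → I → ℤ}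

theorem gen_rel {x y : FreeAlgebra (RatFunc ℚ) (Gen I)} (h : QGRel I c x y) :
    RingQuot.mkAlgHom (RatFunc ℚ) (QGRel I c) x = RingQuot.mkAlgHom (RatFunc ℚ) (QGRel I c) y :=
  RingQuot.mkAlgHom_rel _ h

def Kunit (c : I → I → ℤ) (a : I) : (QG I c)ˣ where
  val := gen c (Gen.K a)
  inv := gen c (Gen.Ki a)
  val_inv := by
    have h := gen_rel (QGRel.Kinv (c := c) a)
    rwa [map_mul, map_one] at h
  inv_val := by
    have h := gen_rel (QGRel.invK (c := c) a)
    rwa [map_mul, map_one] at h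

def K'unit (c : I → I → ℤ) (a : I) : (QG I c)ˣ where
  val := gen c (Gen.K' a)
  inv := gen c (Gen.K'i a)
  val_inv := by
    have h := gen_rel (QGRel.K'inv (c := c) a)
    rwa [map_mul, map_one] at h
  inv_val := by
    have h := gen_rel (QGRel.invK' (c := c) a)
    rwa [map_mul, map_one] at h

theorem commute_gen_K (a b : I) : Commute (gen c (Gen.K a)) (gen c (Gen.K b)) := by
  have h := gen_rel (QGRel.KK (c := c) a b)
  rwa [map_mul, map_mul] at h

theorem commute_gen_K' (a b : I) : Commute (gen c (Gen.K' a)) (gen c (Gen.K' b)) := by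
  have h := gen_rel (QGRel.K'K' (c := c) a b)
  rwa [map_mul, map_mul] at h

theorem gen_K_mul_gen_E (a b : I) :
    gen c (Gen.K a) * gen c (Gen.E b) = v ^ c a b • (gen c (Gen.E b) * gen c (Gen.K a)) := by
  have h := gen_rel (QGRel.KE (c := c) a b)
  rwa [map_mul, map_smul, map_mul] at h

theorem gen_K'_mul_gen_F (a b : I) :
    gen c (Gen.K' a) * gen c (Gen.F b) = v ^ c a b • (gen c (Gen.F b) * gen c (Gen.K' a)) := by
  have h := gen_rel (QGRel.K'F (c := c) a b)
  rwa [map_mul, map_smul, map_mul] at h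

theorem Kmu_mem_closure [Fintype I] (μ : I → ℤ) :
    Kmu c μ ∈ Submonoid.closure
      (Set.range (fun a => (Kunit c a : QG I c)) ∪ Set.range (fun a => ↑(Kunit c a)⁻¹)) := by
  refine Submonoid.list_prod_mem _ ?_
  simp only [List.mem_map]
  rintro _ ⟨a, -, rfl⟩
  unfold Kzpow
  split_ifs
  · exact pow_mem (Submonoid.subset_closure (Set.mem_union_left _ (Set.mem_range_self a))) _
  · exact pow_mem (Submonoid.subset_closure (Set.mem_union_right _ (Set.mem_range_self a))) _

theorem K'mu_mem_closure [Fintype I] (μ : I → ℤ) :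
    K'mu c μ ∈ Submonoid.closure
      (Set.range (fun a => (K'unit c a : QG I c)) ∪ Set.range (fun a => ↑(K'unit c a)⁻¹)) := by
  refine Submonoid.list_prod_mem _ ?_
  simp only [List.mem_map]
  rintro _ ⟨a, -, rfl⟩
  unfold K'zpow
  split_ifs
  · exact pow_mem (Submonoid.subset_closure (Set.mem_union_left _ (Set.mem_range_self a))) _
  · exact pow_mem (Submonoid.subset_closure (Set.mem_union_right _ (Set.mem_range_self a))) _

theorem Kmu_single [Fintype I] (j : I) (m : ℤ) : Kmu c (Pi.single j m) = Kzpow c j m :=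
  List.prod_map_piSingle (Finset.nodup_toList _) (Finset.mem_toList.mpr (Finset.mem_univ j)) _
    (fun k => by simp [Kzpow]) m

theorem K'mu_single [Fintype I] (j : I) (m : ℤ) : K'mu c (Pi.single j m) = K'zpow c j m :=
  List.prod_map_piSingle (Finset.nodup_toList _) (Finset.mem_toList.mpr (Finset.mem_univ j)) _
    (fun k => by simp [K'zpow]) m

theorem gen_K_eq_Kmu [Fintype I] (j : I) : gen c (Gen.K j) = Kmu c (Pi.single j 1) := by
  simp [Kmu_single, Kzpow]

theorem gen_Ki_eq_Kmu [Fintype I] (j : I) : gen c (Gen.Ki j) = Kmu c (Pi.single j (-1)) := by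
  simp [Kmu_single, Kzpow]

theorem gen_K'_eq_K'mu [Fintype I] (j : I) : gen c (Gen.K' j) = K'mu c (Pi.single j 1) := by
  simp [K'mu_single, K'zpow]

theorem gen_K'i_eq_K'mu [Fintype I] (j : I) : gen c (Gen.K'i j) = K'mu c (Pi.single j (-1)) := by
  simp [K'mu_single, K'zpow]

theorem gen_K_mul_gen_E_self {i : I} (h : c i i = 2) :
    gen c (Gen.K i) * gen c (Gen.E i) = v ^ 2 • (gen c (Gen.E i) * gen c (Gen.K i)) := by
  rw [gen_K_mul_gen_E, h, zpow_ofNat]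

theorem gen_K'_mul_gen_F_self {i : I} (h : c i i = 2) :
    gen c (Gen.K' i) * gen c (Gen.F i) = v ^ 2 • (gen c (Gen.F i) * gen c (Gen.K' i)) := by
  rw [gen_K'_mul_gen_F, h, zpow_ofNat]

theorem v_inv_smul_gen_E_mul_gen_Ki {i : I} (h : c i i = 2) :
    v⁻¹ • (gen c (Gen.E i) * gen c (Gen.Ki i)) = v • (gen c (Gen.Ki i) * gen c (Gen.E i)) := by
  have hcomm : gen c (Gen.E i) * gen c (Gen.Ki i) =
      v ^ 2 • (gen c (Gen.Ki i) * gen c (Gen.E i)) :=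
    Units.mul_inv_eq_smul_inv_mul (U := Kunit c i) (gen_K_mul_gen_E_self h)
  rw [hcomm, smul_smul, sq, inv_mul_cancel_left₀ v_ne_zero]

end QG

namespace IsAntiHom

variable {I : Type} [DecidableEq I] [Fintype I] {c : I → I → ℤ} {bar : QG I c → QG I c}

theorem map_Kmu (hb : IsAntiHom bar) (hK : ∀ j, bar (gen c (Gen.K j)) = gen c (Gen.K j))
    (hKi : ∀ j, bar (gen c (Gen.Ki j)) = gen c (Gen.Ki j)) (μ : I → ℤ) :
    bar (Kmu c μ) = Kmu c μ :=
  eq_self_of_mem_closure_of_antiHom hb.map_mul hb.map_one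
    (Units.commute_of_mem_range_union QG.commute_gen_K)
    (by rintro _ (⟨j, rfl⟩ | ⟨j, rfl⟩); exacts [hK j, hKi j]) (QG.Kmu_mem_closure μ)

theorem map_K'mu (hb : IsAntiHom bar) (hK' : ∀ j, bar (gen c (Gen.K' j)) = gen c (Gen.K' j))
    (hK'i : ∀ j, bar (gen c (Gen.K'i j)) = gen c (Gen.K'i j)) (μ : I → ℤ) :
    bar (K'mu c μ) = K'mu c μ :=
  eq_self_of_mem_closure_of_antiHom hb.map_mul hb.map_one
    (Units.commute_of_mem_range_union QG.commute_gen_K')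
    (by rintro _ (⟨j, rfl⟩ | ⟨j, rfl⟩); exacts [hK' j, hK'i j]) (QG.K'mu_mem_closure μ)

end IsAntiHom

theorem braid_commutes_with_bar_general (I : Type) [DecidableEq I] [Fintype I]
    (c : I → I → ℤ) (hdiag : ∀ i, c i i = 2)
    (hoff : ∀ i j, i ≠ j → c i j = 0 ∨ c i j = -1) (i : I)
    (bar : QG I c → QG I c)
    (hbadd : ∀ x y, bar (x + y) = bar x + bar y)
    (hbmul : ∀ x y, bar (x * y) = bar y * bar x)
    (hbone : bar 1 = 1)
    (hbu : ∀ (n : ℤ) (x : QG I c), bar ((u ^ n) • x) = (u ^ (-n)) • bar x)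
    (hbE : ∀ j, bar (gen c (Gen.E j)) = gen c (Gen.E j))
    (hbF : ∀ j, bar (gen c (Gen.F j)) = gen c (Gen.F j))
    (hbK : ∀ j, bar (gen c (Gen.K j)) = gen c (Gen.K j))
    (hbK' : ∀ j, bar (gen c (Gen.K' j)) = gen c (Gen.K' j))
    (hbKi : ∀ j, bar (gen c (Gen.Ki j)) = gen c (Gen.Ki j))
    (hbK'i : ∀ j, bar (gen c (Gen.K'i j)) = gen c (Gen.K'i j))
    (T : QG I c →ₐ[RatFunc ℚ] QG I c)
    (hTK : ∀ μ : I → ℤ, T (Kmu c μ) = Kmu c (si c i μ))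
    (hTK' : ∀ μ : I → ℤ, T (K'mu c μ) = K'mu c (si c i μ))
    (hTEi : T (gen c (Gen.E i)) = v • (gen c (Gen.K'i i) * gen c (Gen.F i)))
    (hTFi : T (gen c (Gen.F i)) = v⁻¹ • (gen c (Gen.E i) * gen c (Gen.Ki i)))
    (hT0 : ∀ j, c i j = 0 → T (gen c (Gen.E j)) = gen c (Gen.E j) ∧
      T (gen c (Gen.F j)) = gen c (Gen.F j))
    (hT1 : ∀ j, c i j = -1 →
      T (gen c (Gen.E j)) = (v - v⁻¹)⁻¹ •
        (u • (gen c (Gen.E i) * gen c (Gen.E j)) - u⁻¹ • (gen c (Gen.E j) * gen c (Gen.E i))) ∧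
      T (gen c (Gen.F j)) = (v - v⁻¹)⁻¹ •
        (u • (gen c (Gen.F i) * gen c (Gen.F j)) - u⁻¹ • (gen c (Gen.F j) * gen c (Gen.F i)))) :
    ∀ x : QG I c, bar (T x) = T (bar x) := by
  have hb : IsAntiHom bar := ⟨hbadd, hbmul, hbone⟩
  have hgen : ∀ g, bar (gen c g) = gen c g := by
    rintro (j | j | j | j | j | j) <;> simp only [hbE, hbF, hbK, hbK', hbKi, hbK'i]
  have hT : ∀ g, bar (T (gen c g)) = T (gen c g) := by
    rintro (j | j | j | j | j | j)
    · rcases eq_or_ne j i with rfl | hj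
      · rw [hTEi]
        exact hb.map_v_smul_inv_mul hbu (U := QG.K'unit c j) (hbK'i j) (hbF j)
          (QG.gen_K'_mul_gen_F_self (hdiag j))
      rcases hoff i j hj.symm with h0 | h1
      · rw [(hT0 j h0).1, hbE]
      · rw [(hT1 j h1).1]
        exact hb.map_qcommutator hbu (hbE i) (hbE j)
    · rcases eq_or_ne j i with rfl | hj
      · rw [hTFi, QG.v_inv_smul_gen_E_mul_gen_Ki (hdiag j)]
        exact hb.map_v_smul_inv_mul hbu (U := QG.Kunit c j) (hbKi j) (hbE j)
          (QG.gen_K_mul_gen_E_self (hdiag j))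
      rcases hoff i j hj.symm with h0 | h1
      · rw [(hT0 j h0).2, hbF]
      · rw [(hT1 j h1).2]
        exact hb.map_qcommutator hbu (hbF i) (hbF j)
    · rw [QG.gen_K_eq_Kmu, hTK, hb.map_Kmu hbK hbKi]
    · rw [QG.gen_K'_eq_K'mu, hTK', hb.map_K'mu hbK' hbK'i]
    · rw [QG.gen_Ki_eq_Kmu, hTK, hb.map_Kmu hbK hbKi]
    · rw [QG.gen_K'i_eq_K'mu, hTK', hb.map_K'mu hbK' hbK'i]
  exact hb.commute_algHom_of_surjective (RingQuot.mkAlgHom_surjective _ _)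
    (hb.exists_map_algebraMap hbu) hgen T hT

/-- the braid group symmetry `T̃_i` commutes with the bar anti-involution:
for any map `bar` satisfying the defining properties of the bar involution and any ring
endomorphism `T` satisfying the defining formulas of `T̃_i`, one has
`bar (T u) = T (bar u)` for all `u ∈ Ũ_v(g)`. -/
theorem braid_commutes_with_bar (I : Type) [DecidableEq I] [Fintype I]
    (c : I → I → ℤ) (hdiag : ∀ i, c i i = 2) (hsym : ∀ i j, c i j = c j i)
    (hoff : ∀ i j, i ≠ j → c i j = 0 ∨ c i j = -1) (i : I)
    (bar : QG I c → QG I c)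
    (hbadd : ∀ x y, bar (x + y) = bar x + bar y)
    (hbmul : ∀ x y, bar (x * y) = bar y * bar x)
    (hbone : bar 1 = 1)
    (hbq : ∀ (q : ℚ) (x : QG I c), bar ((q : RatFunc ℚ) • x) = (q : RatFunc ℚ) • bar x)
    (hbu : ∀ (n : ℤ) (x : QG I c), bar ((u ^ n) • x) = (u ^ (-n)) • bar x)
    (hbE : ∀ j, bar (gen c (Gen.E j)) = gen c (Gen.E j))
    (hbF : ∀ j, bar (gen c (Gen.F j)) = gen c (Gen.F j))
    (hbK : ∀ j, bar (gen c (Gen.K j)) = gen c (Gen.K j))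
    (hbK' : ∀ j, bar (gen c (Gen.K' j)) = gen c (Gen.K' j))
    (hbKi : ∀ j, bar (gen c (Gen.Ki j)) = gen c (Gen.Ki j))
    (hbK'i : ∀ j, bar (gen c (Gen.K'i j)) = gen c (Gen.K'i j))
    (T : QG I c →ₐ[RatFunc ℚ] QG I c)
    (hTK : ∀ μ : I → ℤ, T (Kmu c μ) = Kmu c (si c i μ))
    (hTK' : ∀ μ : I → ℤ, T (K'mu c μ) = K'mu c (si c i μ))
    (hTEi : T (gen c (Gen.E i)) = v • (gen c (Gen.K'i i) * gen c (Gen.F i)))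
    (hTFi : T (gen c (Gen.F i)) = v⁻¹ • (gen c (Gen.E i) * gen c (Gen.Ki i)))
    (hT0 : ∀ j, c i j = 0 → T (gen c (Gen.E j)) = gen c (Gen.E j) ∧
      T (gen c (Gen.F j)) = gen c (Gen.F j))
    (hT1 : ∀ j, c i j = -1 →
      T (gen c (Gen.E j)) = (v - v⁻¹)⁻¹ •
        (u • (gen c (Gen.E i) * gen c (Gen.E j)) - u⁻¹ • (gen c (Gen.E j) * gen c (Gen.E i))) ∧
      T (gen c (Gen.F j)) = (v - v⁻¹)⁻¹ •
        (u • (gen c (Gen.F i) * gen c (Gen.F j)) - u⁻¹ • (gen c (Gen.F j) * gen c (Gen.F i)))) :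
    ∀ x : QG I c, bar (T x) = T (bar x) :=
  braid_commutes_with_bar_general I c hdiag hoff i bar hbadd hbmul hbone hbu hbE hbF hbK hbK' hbKi
    hbK'i T hTK hTK' hTEi hTFi hT0 hT1
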